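/- arXiv:2204.02217 — 3 statements merged into one kernel-verified Lean document; each statement's English description precedes it below -/
import Mathlib

section
/- Let CX = CNOT with control on qubit 1 and target on qubit 0, i.e., CX = (H⊗I)·CZ'·(H⊗I) where CZ' = diag(1,1,1,-1), and let NX (negatively controlled NOT) be defined by NX = CX·((H·S·S·H)⊗I₂). Let T₀ = T⊗I₂, H₀ = H⊗I₂ and T₀† = T₀⁷ (so that A₀ = T₀·H₀·T₀† = (T·H·T†)⊗I₂ with T† = T⁷). Then CX·(T₀·H₀·T₀†)·NX·(T₀·H₀·T₀†) = (T₀·H₀·T₀†)·NX·(T₀·H₀·T₀†)·CX. -/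
open Matrix Kronecker

noncomputable def ω : ℂ := Complex.exp (Real.pi * Complex.I / 4)

noncomputable def H : Matrix (Fin 2) (Fin 2) ℂ :=
  ((Real.sqrt 2 : ℂ))⁻¹ • !![1, 1; 1, -1]

def S : Matrix (Fin 2) (Fin 2) ℂ := !![1, 0; 0, Complex.I]

noncomputable def T : Matrix (Fin 2) (Fin 2) ℂ := !![1, 0; 0, ω]

def CZ : Matrix (Fin 2 × Fin 2) (Fin 2 × Fin 2) ℂ :=
  Matrix.diagonal fun p => if p = (1, 1) then -1 else 1

noncomputable def H₀ : Matrix (Fin 2 × Fin 2) (Fin 2 × Fin 2) ℂ := H ⊗ₖ (1 : Matrix (Fin 2) (Fin 2) ℂ)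
noncomputable def T₀ : Matrix (Fin 2 × Fin 2) (Fin 2 × Fin 2) ℂ := T ⊗ₖ (1 : Matrix (Fin 2) (Fin 2) ℂ)

/-- CNOT with control on qubit 1 and target on qubit 0. -/
noncomputable def CX : Matrix (Fin 2 × Fin 2) (Fin 2 × Fin 2) ℂ := H₀ * CZ * H₀

/-- Negatively controlled NOT (control on qubit 1, target on qubit 0). -/
noncomputable def NX : Matrix (Fin 2 × Fin 2) (Fin 2 × Fin 2) ℂ :=
  CX * ((H * S * S * H) ⊗ₖ (1 : Matrix (Fin 2) (Fin 2) ℂ))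


lemma hs2 : (Real.sqrt 2 : ℂ)^2 = 2 := by
  norm_cast
  rw [Real.sq_sqrt] ; norm_num

lemma hsne : (Real.sqrt 2 : ℂ) ≠ 0 := by
  intro h
  have := hs2
  rw [h] at this; norm_num at this

lemma hω : ω = (1 + Complex.I) / (Real.sqrt 2 : ℂ) := by
  rw [ω, show (Real.pi : ℂ) * Complex.I / 4 = (Real.pi/4 : ℝ) * Complex.I by push_cast; ring, Complex.exp_mul_I]
  rw [← Complex.ofReal_cos, ← Complex.ofReal_sin, Real.cos_pi_div_four, Real.sin_pi_div_four]
  push_cast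
  field_simp
  linear_combination (1 + Complex.I) * hs2

lemma hω2 : ω^2 = Complex.I := by
  rw [hω]; field_simp; linear_combination (-Complex.I) * hs2 + Complex.I_sq

lemma hω4 : ω^4 = -1 := by
  linear_combination (ω^2 + Complex.I)*hω2 + Complex.I_sq

lemma hω8 : ω^8 = 1 := by
  linear_combination (ω^4 - 1) * hω4

lemma hT7 : T^7 = !![1,0;0,ω^7] := by
  simp [T, pow_succ, Matrix.mul_fin_two]

lemma hA2 : (T*H*T^7) * (T*H*T^7) = 1 := by
  rw [hT7]
  ext i j
  fin_cases i <;> fin_cases j <;>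
    simp [T, H, Matrix.mul_apply, Fin.sum_univ_succ, Matrix.one_apply] <;>
    field_simp <;>
    first
      | linear_combination hω8 - hs2
      | linear_combination (-ω^7) * hω8
      | linear_combination (-ω) * hω8
      | linear_combination (ω^8 + 2) * hω8 - hs2

def Xm : Matrix (Fin 2) (Fin 2) ℂ := !![0,1;1,0]
def Zm : Matrix (Fin 2) (Fin 2) ℂ := !![1,0;0,-1]
def P0 : Matrix (Fin 2) (Fin 2) ℂ := !![1,0;0,0]
def P1 : Matrix (Fin 2) (Fin 2) ℂ := !![0,0;0,1]

lemma hH2 : H * H = 1 := by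
  ext i j
  fin_cases i <;> fin_cases j <;>
    simp [H, Matrix.mul_apply, Fin.sum_univ_succ, Matrix.one_apply] <;>
    field_simp <;> first | linear_combination hs2 | linear_combination -hs2

lemma hHZH : H * (S * S) * H = Xm := by
  ext i j
  fin_cases i <;> fin_cases j <;>
    simp [H, S, Xm, Matrix.mul_apply, Fin.sum_univ_succ, Complex.I_mul_I] <;>
    field_simp <;> first | linear_combination hs2 | linear_combination -hs2

lemma hCZd : CZ = 1 ⊗ₖ P0 + Zm ⊗ₖ P1 := by
  ext ⟨i,j⟩ ⟨k,l⟩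
  fin_cases i <;> fin_cases j <;> fin_cases k <;> fin_cases l <;>
    simp [CZ, Zm, P0, P1, Matrix.one_apply, Matrix.diagonal, Prod.ext_iff]

lemma hCXd : CX = Xm ⊗ₖ P1 + 1 ⊗ₖ P0 := by
  rw [CX, hCZd, H₀]
  simp only [Matrix.mul_add, Matrix.add_mul, ← Matrix.mul_kronecker_mul,
    Matrix.mul_one, Matrix.one_mul, hH2]
  rw [show H * Zm * H = Xm by rw [← hHZH]; congr 1; norm_num [S, Zm, Matrix.mul_fin_two]]
  abel

lemma hXX : Xm * Xm = 1 := by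
  rw [show (1 : Matrix (Fin 2) (Fin 2) ℂ) = !![1,0;0,1] by ext i j; fin_cases i <;> fin_cases j <;> simp [Matrix.one_apply]]
  norm_num [Xm, Matrix.mul_fin_two]

lemma hNXd : NX = 1 ⊗ₖ P1 + Xm ⊗ₖ P0 := by
  rw [NX, hCXd, show H * S * S * H = Xm by rw [mul_assoc H S S, hHZH]]
  simp only [Matrix.add_mul, ← Matrix.mul_kronecker_mul, Matrix.mul_one, Matrix.one_mul, hXX]

lemma hA0 : T₀ * H₀ * T₀^7 = (T * H * T^7) ⊗ₖ (1 : Matrix (Fin 2) (Fin 2) ℂ) := by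
  have : T₀^7 = (T^7) ⊗ₖ (1 : Matrix (Fin 2) (Fin 2) ℂ) := by
    simp only [T₀, pow_succ, pow_zero, ← Matrix.mul_kronecker_mul, Matrix.one_mul, Matrix.mul_one]
  rw [this, T₀, H₀, ← Matrix.mul_kronecker_mul, ← Matrix.mul_kronecker_mul, Matrix.mul_one, Matrix.mul_one]

lemma hP00 : P0 * P0 = P0 := by
  ext i j; fin_cases i <;> fin_cases j <;> simp [P0, Matrix.mul_apply, Fin.sum_univ_succ]
lemma hP11 : P1 * P1 = P1 := by
  ext i j; fin_cases i <;> fin_cases j <;> simp [P1, Matrix.mul_apply, Fin.sum_univ_succ]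
lemma hP01 : P0 * P1 = 0 := by
  ext i j; fin_cases i <;> fin_cases j <;> simp [P0, P1, Matrix.mul_apply, Fin.sum_univ_succ]
lemma hP10 : P1 * P0 = 0 := by
  ext i j; fin_cases i <;> fin_cases j <;> simp [P0, P1, Matrix.mul_apply, Fin.sum_univ_succ]


theorem relation_a :
    CX * (T₀ * H₀ * T₀ ^ 7) * NX * (T₀ * H₀ * T₀ ^ 7) =
      (T₀ * H₀ * T₀ ^ 7) * NX * (T₀ * H₀ * T₀ ^ 7) * CX := by
  rw [hA0, hNXd, hCXd]
  set A := T * H * T ^ 7 with hA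
  have h1 : ∀ B : Matrix (Fin 2) (Fin 2) ℂ, B * A * A = B := by
    intro B; rw [mul_assoc, hA2, mul_one]
  have h2 : A * A * Xm = Xm := by rw [hA2, one_mul]
  simp only [Matrix.add_mul, Matrix.mul_add, ← Matrix.mul_kronecker_mul,
    Matrix.mul_one, Matrix.one_mul, hP00, hP11, hP01, hP10, hXX, hA2, h1, h2,
    Matrix.kronecker_zero, Matrix.zero_kronecker, add_zero, zero_add]
end

section
/- Reidemeister–Schreier theorem for monoids: Let X and Y be sets, 𝒮 a set of relations over X (pairs of words in X*), ℛ a set of relations over Y. Suppose given a set C with distinguished element I ∈ C, a function f : X → Y*, and a function h : C × Y → X* × C. Let f* : X* → Y* be the monoid-homomorphic extension of f, and h** : C × Y* → X* × C the stateful extension of h (threading the C-component through letters and concatenating the output words). Assume: (a) for all x ∈ X, if h**(I, f(x)) = (v, c) then v ∼_𝒮 x and c = I; (b) for all c ∈ C and (w, w') ∈ ℛ, if h**(c, w) = (v, c') and h**(c, w') = (v', c'') then v ∼_𝒮 v' and c' = c''. Then for all v, v' ∈ X*, f*(v) ∼_ℛ f*(v') implies v ∼_𝒮 v'. -/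
/-- The smallest monoid congruence on words (lists) over `X` containing the set of
relations `S`: reflexive, symmetric, transitive, contains `S`, and compatible with
concatenation. -/
inductive Cong {X : Type*} (S : Set (List X × List X)) : List X → List X → Prop
  | base {w v : List X} : (w, v) ∈ S → Cong S w v
  | refl (w : List X) : Cong S w w
  | symm {w v : List X} : Cong S w v → Cong S v w
  | trans {w v u : List X} : Cong S w v → Cong S v u → Cong S w u
  | append {w v w' v' : List X} : Cong S w v → Cong S w' v' → Cong S (w ++ w') (v ++ v')

/-- The stateful extension `h** : C × Y* → X* × C` of `h : C × Y → X* × C`: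
it threads the state through the letters of the word and concatenates the
output words. -/
def hss {C X Y : Type*} (h : C → Y → List X × C) : C → List Y → List X × C
  | c, [] => ([], c)
  | c, y :: ys =>
    let p := h c y
    let q := hss h p.2 ys
    (p.1 ++ q.1, q.2)

/-- The homomorphic extension `f* : X* → Y*` of `f : X → Y*`. -/
def fstar {X Y : Type*} (f : X → List Y) : List X → List Y
  | [] => []
  | x :: xs => f x ++ fstar f xs

lemma hss_append {C X Y : Type*} (h : C → Y → List X × C) (c : C) (w w' : List Y) :
    hss h c (w ++ w') =
      ((hss h c w).1 ++ (hss h (hss h c w).2 w').1, (hss h (hss h c w).2 w').2) := by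
  induction w generalizing c with
  | nil => simp [hss]
  | cons y ys ih => simp [hss, ih]

lemma cong_hss {X Y C : Type*}
    (S : Set (List X × List X)) (R : Set (List Y × List Y))
    (h : C → Y → List X × C)
    (hb : ∀ c : C, ∀ w w' : List Y, (w, w') ∈ R →
      ∀ v v' : List X, ∀ c' c'' : C,
        hss h c w = (v, c') → hss h c w' = (v', c'') → Cong S v v' ∧ c' = c'')
    {w w' : List Y} (hw : Cong R w w') :
    ∀ c : C, Cong S (hss h c w).1 (hss h c w').1 ∧ (hss h c w).2 = (hss h c w').2 := by
  induction hw with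
  | base hm => intro c; exact hb c _ _ hm _ _ _ _ rfl rfl
  | refl w => intro c; exact ⟨Cong.refl _, rfl⟩
  | symm _ ih => intro c; exact ⟨(ih c).1.symm, (ih c).2.symm⟩
  | trans _ _ ih1 ih2 =>
      intro c; exact ⟨(ih1 c).1.trans (ih2 c).1, (ih1 c).2.trans (ih2 c).2⟩
  | @append a b a' b' _ _ ih1 ih2 =>
      intro c
      rw [hss_append, hss_append]
      obtain ⟨h1, h2⟩ := ih1 c
      rw [← h2]
      obtain ⟨h3, h4⟩ := ih2 (hss h c a).2
      exact ⟨h1.append h3, h4⟩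

lemma hss_fstar {X Y C : Type*}
    (S : Set (List X × List X))
    (I : C) (f : X → List Y) (h : C → Y → List X × C)
    (ha : ∀ x : X, ∀ v : List X, ∀ c : C,
      hss h I (f x) = (v, c) → Cong S v [x] ∧ c = I)
    (v : List X) :
    Cong S (hss h I (fstar f v)).1 v ∧ (hss h I (fstar f v)).2 = I := by
  induction v with
  | nil => exact ⟨Cong.refl _, rfl⟩
  | cons x xs ih =>
      have hx := ha x (hss h I (f x)).1 (hss h I (f x)).2 rfl
      simp only [fstar]
      rw [hss_append, hx.2]
      exact ⟨hx.1.append ih.1, ih.2⟩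

/-- Reidemeister–Schreier theorem for monoids. -/
theorem reidemeister_schreier {X Y C : Type*}
    (S : Set (List X × List X)) (R : Set (List Y × List Y))
    (I : C) (f : X → List Y) (h : C → Y → List X × C)
    (ha : ∀ x : X, ∀ v : List X, ∀ c : C,
      hss h I (f x) = (v, c) → Cong S v [x] ∧ c = I)
    (hb : ∀ c : C, ∀ w w' : List Y, (w, w') ∈ R →
      ∀ v v' : List X, ∀ c' c'' : C,
        hss h c w = (v, c') → hss h c w' = (v', c'') → Cong S v v' ∧ c' = c'') :
    ∀ v v' : List X, Cong R (fstar f v) (fstar f v') → Cong S v v' := by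
  intro v v' hvv
  have h1 := (cong_hss S R h hb hvv I).1
  have h2 := (hss_fstar S I f h ha v).1
  have h3 := (hss_fstar S I f h ha v').1
  exact (h2.symm.trans h1).trans h3
end

section
/- (Claim B of the Reidemeister–Schreier proof) Let 𝒮 and ℛ be sets of relations over X and Y, h : C × Y → X* × C, with hypothesis (b): for all c ∈ C and (w,w') ∈ ℛ, h**(c,w) = (v,c') and h**(c,w') = (v',c'') imply v ∼_𝒮 v' and c' = c''. Then for all w, w' ∈ Y* and all c ∈ C, if w ∼_ℛ w' and h**(c,w) = (v,d), h**(c,w') = (v',d'), then v ∼_𝒮 v' and d = d'. -/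
/-- Claim B of the Reidemeister–Schreier proof: under hypothesis (b), for all words
`w, w' ∈ Y*` and every state `c ∈ C`, if `w ∼_ℛ w'` then the translated words are
`𝒮`-congruent and the final states agree. -/
theorem claim_B {X Y C : Type*}
    (S : Set (List X × List X)) (R : Set (List Y × List Y))
    (h : C → Y → List X × C)
    (hb : ∀ c : C, ∀ w w' : List Y, (w, w') ∈ R →
      ∀ v v' : List X, ∀ c' c'' : C,
        hss h c w = (v, c') → hss h c w' = (v', c'') → Cong S v v' ∧ c' = c'') :
    ∀ w w' : List Y, ∀ c : C, Cong R w w' →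
      ∀ v v' : List X, ∀ d d' : C,
        hss h c w = (v, d) → hss h c w' = (v', d') → Cong S v v' ∧ d = d' := by
  intro w w' c hc
  induction hc generalizing c with
  | base hmem =>
      intro v v' d d' h1 h2
      exact hb c _ _ hmem v v' d d' h1 h2
  | refl w =>
      intro v v' d d' h1 h2
      rw [h1] at h2
      exact ⟨(Prod.mk.injEq _ _ _ _ ▸ h2).1 ▸ Cong.refl v, (Prod.mk.injEq _ _ _ _ ▸ h2).2⟩
  | symm _ ih =>
      intro v v' d d' h1 h2
      obtain ⟨hc, hd⟩ := ih c v' v d' d h2 h1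
      exact ⟨hc.symm, hd.symm⟩
  | trans _ _ ih1 ih2 =>
      rename_i w v u _ _
      intro a a' d d' h1 h2
      obtain ⟨hc1, hd1⟩ := ih1 c a (hss h c v).1 d (hss h c v).2 h1 rfl
      obtain ⟨hc2, hd2⟩ := ih2 c (hss h c v).1 a' (hss h c v).2 d' rfl h2
      exact ⟨hc1.trans hc2, hd1.trans hd2⟩
  | append _ _ ih1 ih2 =>
      rename_i w v w' v' _ _
      intro a a' d d' h1 h2
      rw [hss_append] at h1 h2
      obtain ⟨hc1, hd1⟩ := ih1 c (hss h c w).1 (hss h c v).1 (hss h c w).2 (hss h c v).2 rfl rfl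
      obtain ⟨hc2, hd2⟩ := ih2 (hss h c w).2 (hss h (hss h c w).2 w').1
        (hss h (hss h c v).2 v').1 (hss h (hss h c w).2 w').2 (hss h (hss h c v).2 v').2
        rfl (by rw [hd1])
      obtain ⟨rfl, rfl⟩ := Prod.mk.injEq _ _ _ _ ▸ h1.symm
      obtain ⟨rfl, rfl⟩ := Prod.mk.injEq _ _ _ _ ▸ h2.symm
      exact ⟨hc1.append hc2, by rw [← hd1] at hd2 ⊢; exact hd2⟩
end
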